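/- arXiv:2504.09901 — 8 statements merged into one kernel-verified Lean document; each statement's English description precedes it below -/
import Mathlib

section
/- For every $p,q > 2$ and all sufficiently small $\epsilon, \delta > 0$, the explicit assignment of angle triples given in the paper (angles $a_j,b_j,c_j$ for six tetrahedra, $a_{k,1},b_{k,1},c_{k,1}$ for $k=0,\dots,p-3$, and $a_{j,2},b_{j,2},c_{j,2}$ for $j=0,\dots,q-3$) satisfies: every triple consists of numbers in $(0,\pi)$ summing to $\pi$, and all twelve edge gluing equations of the triangulation $\mathcal{T}_{K(p,q)}$ hold. In particular the set of angle structures $\mathscr{A}(\mathcal{T}_{K(p,q)})$ is nonempty. -/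
open Real Finset

/-- Angle `a_{k,i}` of the `k`-th layered solid torus tetrahedron (filling parameter `r`,
perturbation `ε`). -/
noncomputable def aL (r : ℕ) (ε : ℝ) (k : ℕ) : ℝ := ε * ((r : ℝ) - k - 2)^2

/-- Angle `b_{k,i}`. -/
noncomputable def bL (r : ℕ) (ε : ℝ) (k : ℕ) : ℝ :=
  if k = 0 then π/2 - ε * ((r : ℝ) - 2)^2 / 2 else ε

/-- Angle `c_{k,i}`. -/
noncomputable def cL (r : ℕ) (ε : ℝ) (k : ℕ) : ℝ :=
  if k = 0 then π/2 - ε * ((r : ℝ) - 2)^2 / 2 else π - ε * (((r : ℝ) - k - 2)^2 + 1)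

/-- A valid angle triple: all angles in `(0, π)` and summing to `π`. -/
def OkTriple (x y z : ℝ) : Prop :=
  0 < x ∧ x < π ∧ 0 < y ∧ y < π ∧ 0 < z ∧ z < π ∧ x + y + z = π

lemma okTriple_of {x y z : ℝ} (hx : 0 < x) (hy : 0 < y) (hz : 0 < z)
    (h : x + y + z = π) : OkTriple x y z :=
  ⟨hx, by linarith, hy, by linarith, hz, by linarith, h⟩

lemma pert_bound {ε t B c : ℝ} (hε : 0 < ε) (ht0 : 0 ≤ t) (htB : t ≤ B)
    (hB : ε * B < c) : 0 ≤ ε * t ∧ ε * t < c :=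
  ⟨mul_nonneg hε.le ht0, lt_of_le_of_lt (by nlinarith) hB⟩

lemma layered_ok (r : ℕ) (hr : 2 < r) {ε : ℝ} (hε : 0 < ε)
    (hεb : ε * ((r:ℝ)^2 + 1) < π/24) :
    ∀ k ≤ r - 3, OkTriple (aL r ε k) (bL r ε k) (cL r ε k) := by
  have hR : (3:ℝ) ≤ (r:ℝ) := by exact_mod_cast hr
  have hπ := pi_pos
  intro k hk
  have hk' : (k:ℝ) ≤ (r:ℝ) - 3 := by
    have h3 : k + 3 ≤ r := by omega
    have := (Nat.cast_le (α := ℝ)).2 h3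
    push_cast at this; linarith
  by_cases hk0 : k = 0
  · subst hk0
    simp only [aL, bL, cL, Nat.cast_zero, sub_zero, reduceIte]
    obtain ⟨g0, g1⟩ := pert_bound hε (t := ((r:ℝ)-2)^2) (by positivity)
      (by nlinarith) hεb
    have hpos : (0:ℝ) < ((r:ℝ)-2)^2 := by nlinarith
    exact okTriple_of (mul_pos hε hpos) (by linarith) (by linarith) (by ring)
  · simp only [aL, bL, cL, if_neg hk0]
    have hx1 : (1:ℝ) ≤ (r:ℝ) - (k:ℝ) - 2 := by linarith
    obtain ⟨g0, g1⟩ := pert_bound hε (t := ((r:ℝ)-(k:ℝ)-2)^2 + 1) (by positivity)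
      (by nlinarith [Nat.cast_nonneg (α := ℝ) k]) hεb
    apply okTriple_of (mul_pos hε (by nlinarith)) hε (by linarith) (by ring)

lemma layered_sum (r : ℕ) (hr : 2 < r) (ε : ℝ) :
    (∑ k ∈ Finset.range (r-2), 2 * bL r ε k)
      = π - ε*((r:ℝ)-2)^2 + 2*ε*((r:ℝ)-3) := by
  have h : r - 2 = (r-3) + 1 := by omega
  rw [h, Finset.sum_range_succ']
  simp only [bL, Nat.succ_ne_zero, reduceIte, Finset.sum_const, Finset.card_range, nsmul_eq_mul]
  have hc : ((r-3:ℕ):ℝ) = (r:ℝ) - 3 := by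
    rw [Nat.cast_sub (by omega)]; norm_num
  rw [hc]; ring

lemma layered_mid (r : ℕ) (ε : ℝ) :
    ∀ k, 2 ≤ k → k ≤ r - 3 → aL r ε (k-2) + 2 * cL r ε (k-1) + aL r ε k = 2*π := by
  intro k h2 _
  have hk1 : k - 1 ≠ 0 := by omega
  have e1 : ((k-1:ℕ):ℝ) = (k:ℝ) - 1 := by
    rw [Nat.cast_sub (by omega)]; norm_num
  have e2 : ((k-2:ℕ):ℝ) = (k:ℝ) - 2 := by
    rw [Nat.cast_sub (by omega)]; norm_num
  simp only [aL, cL, if_neg hk1, e1, e2]; ring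

lemma layered_end (r : ℕ) (hr : 4 ≤ r) (ε : ℝ) :
    aL r ε (r-4) + 2 * cL r ε (r-3) = 2*π := by
  have h3 : r - 3 ≠ 0 := by omega
  have e1 : ((r-4:ℕ):ℝ) = (r:ℝ) - 4 := by
    rw [Nat.cast_sub (by omega)]; norm_num
  have e2 : ((r-3:ℕ):ℝ) = (r:ℝ) - 3 := by
    rw [Nat.cast_sub (by omega)]; norm_num
  simp only [aL, cL, if_neg h3, e1, e2]; ring

set_option maxHeartbeats 1000000 in
/-- For all `p, q > 2` and all sufficiently small `ε, δ > 0`, the explicit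
angle assignment of Lemma 3.2 consists of valid angle triples and satisfies all twelve
edge gluing equations of `𝒯_{K(p,q)}`; in particular `𝒜(𝒯_{K(p,q)}) ≠ ∅`. -/
theorem angle_structure_nonempty (p q : ℕ) (hp : 2 < p) (hq : 2 < q) :
    ∃ ε₀ δ₀ : ℝ, 0 < ε₀ ∧ 0 < δ₀ ∧ ∀ ε δ : ℝ, 0 < ε → ε < ε₀ → 0 < δ → δ < δ₀ →
    (let P : ℝ := (p : ℝ); let Q : ℝ := (q : ℝ)
     let a0 := π/3; let b0 := π/6 - ε*(2*P-5) + δ*(Q^2-6*Q+9)/2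
     let c0 := π/2 + ε*(2*P-5) - δ*(Q^2-6*Q+9)/2
     let a1 := π/6 - δ*(Q^2-2*Q-1)/2; let b1 := π/3 + δ*(2*Q-5)
     let c1 := π/2 + δ*(Q^2-6*Q+9)/2
     let a2 := π/6 - δ*(Q^2-6*Q+9)/2; let b2 := π/3; let c2 := π/2 + δ*(Q^2-6*Q+9)/2
     let a3 := π/2 - ε*(P^2-2*P-1)/2; let b3 := π/3 + ε*(2*P-5)
     let c3 := π/6 + ε*(P^2-6*P+9)/2
     let a4 := π/6 - ε*(P^2-6*P+9)/2; let b4 := π/3; let c4 := π/2 + ε*(P^2-6*P+9)/2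
     let a5 := a4; let b5 := b4; let c5 := c4
     -- all triples are valid angle triples
     OkTriple a0 b0 c0 ∧ OkTriple a1 b1 c1 ∧ OkTriple a2 b2 c2 ∧
     OkTriple a3 b3 c3 ∧ OkTriple a4 b4 c4 ∧ OkTriple a5 b5 c5 ∧
     (∀ k ≤ p - 3, OkTriple (aL p ε k) (bL p ε k) (cL p ε k)) ∧
     (∀ k ≤ q - 3, OkTriple (aL q δ k) (bL q δ k) (cL q δ k)) ∧
     -- the twelve edge gluing equations
     (2*b0 + a1 + b1 + a2 + b2 + b3 + a4 + a5 + aL p ε 0 = 2*π) ∧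
     (b3 + b4 + b5 + 2 * cL p ε 0 + aL p ε 1 = 2*π) ∧
     (c4 + c5 + (∑ k ∈ Finset.range (p-2), 2 * bL p ε k) + aL p ε (p-3) = 2*π) ∧
     (∀ k, 2 ≤ k → k ≤ p - 3 → aL p ε (k-2) + 2 * cL p ε (k-1) + aL p ε k = 2*π) ∧
     (4 ≤ p → aL p ε (p-4) + 2 * cL p ε (p-3) = 2*π) ∧
     (c0 + c2 + a3 + c5 = 2*π) ∧
     (c0 + c1 + a3 + c4 = 2*π) ∧
     (a0 + a1 + a2 + 2*c3 + a4 + b4 + a5 + b5 + aL q δ 0 = 2*π) ∧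
     (a0 + b1 + b2 + 2 * cL q δ 0 + aL q δ 1 = 2*π) ∧
     (c1 + c2 + (∑ k ∈ Finset.range (q-2), 2 * bL q δ k) + aL q δ (q-3) = 2*π) ∧
     (∀ j, 2 ≤ j → j ≤ q - 3 → aL q δ (j-2) + 2 * cL q δ (j-1) + aL q δ j = 2*π) ∧
     (4 ≤ q → aL q δ (q-4) + 2 * cL q δ (q-3) = 2*π)) := by
  have hπ := pi_pos
  have hP : (3:ℝ) ≤ (p:ℝ) := by exact_mod_cast hp
  have hQ : (3:ℝ) ≤ (q:ℝ) := by exact_mod_cast hq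
  have hPd : (0:ℝ) < (p:ℝ)^2 + 1 := by positivity
  have hQd : (0:ℝ) < (q:ℝ)^2 + 1 := by positivity
  refine ⟨(π/24) / ((p:ℝ)^2 + 1), (π/24) / ((q:ℝ)^2 + 1), by positivity, by positivity, ?_⟩
  intro ε δ hε hε' hδ hδ'
  rw [lt_div_iff₀ hPd] at hε'
  rw [lt_div_iff₀ hQd] at hδ'
  -- perturbation bounds
  obtain ⟨u1, u1'⟩ := pert_bound hε (t := 2*(p:ℝ)-5) (by linarith) (by nlinarith) hε'
  obtain ⟨u2, u2'⟩ := pert_bound hε (t := (p:ℝ)^2-2*(p:ℝ)-1) (by nlinarith) (by nlinarith) hε'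
  obtain ⟨u3, u3'⟩ := pert_bound hε (t := (p:ℝ)^2-6*(p:ℝ)+9) (by nlinarith) (by nlinarith) hε'
  obtain ⟨v1, v1'⟩ := pert_bound hδ (t := 2*(q:ℝ)-5) (by linarith) (by nlinarith) hδ'
  obtain ⟨v2, v2'⟩ := pert_bound hδ (t := (q:ℝ)^2-2*(q:ℝ)-1) (by nlinarith) (by nlinarith) hδ'
  obtain ⟨v3, v3'⟩ := pert_bound hδ (t := (q:ℝ)^2-6*(q:ℝ)+9) (by nlinarith) (by nlinarith) hδ'
  have e3p : ((p-3:ℕ):ℝ) = (p:ℝ) - 3 := by rw [Nat.cast_sub (by omega)]; norm_num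
  have e3q : ((q-3:ℕ):ℝ) = (q:ℝ) - 3 := by rw [Nat.cast_sub (by omega)]; norm_num
  refine ⟨?_, ?_, ?_, ?_, ?_, ?_, ?_, ?_, ?_, ?_, ?_, ?_, ?_, ?_, ?_, ?_, ?_, ?_, ?_, ?_⟩
  · exact okTriple_of (by linarith) (by linarith) (by linarith) (by ring)
  · exact okTriple_of (by linarith) (by linarith) (by linarith) (by ring)
  · exact okTriple_of (by linarith) (by linarith) (by linarith) (by ring)
  · exact okTriple_of (by linarith) (by linarith) (by linarith) (by ring)
  · exact okTriple_of (by linarith) (by linarith) (by linarith) (by ring)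
  · exact okTriple_of (by linarith) (by linarith) (by linarith) (by ring)
  · exact layered_ok p hp hε hε'
  · exact layered_ok q hq hδ hδ'
  · simp only [aL, Nat.cast_zero]; ring
  · simp only [aL, cL, Nat.cast_one, reduceIte]; ring
  · rw [layered_sum p hp ε]; simp only [aL, e3p]; ring
  · exact layered_mid p ε
  · exact fun h => layered_end p h ε
  · ring
  · ring
  · simp only [aL, Nat.cast_zero]; ring
  · simp only [aL, cL, Nat.cast_one, reduceIte]; ring
  · rw [layered_sum q hq δ]; simp only [aL, e3q]; ring
  · exact layered_mid q δ
  · exact fun h => layered_end q h δ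
end

section
/- Suppose real numbers satisfying the tetrahedron conditions $X+Y+Z=\pi$, $U+V+W=\pi$, $a_i+b_i+c_i=\pi$ for $i=0,3$, $a_{k,1}+b_{k,1}+c_{k,1}=\pi$ for $0 \le k \le p-3$ satisfy the system: $a_{0,1}+2b_0+b_3+2U+2X+2Y = 2\pi$; $a_{1,1}+b_3+2c_{0,1}+2V = 2\pi$; $2W + 2b_{0,1}+\cdots+2b_{p-3,1}+a_{p-3,1} = 2\pi$; $2c_{i+1,1}+a_{i+2,1}+a_{i,1} = 2\pi$ for $0 \le i \le p-5$; and $a_{p-4,1}+2c_{p-3,1} = 2\pi$. Then $Z = b_0 + b_3$. -/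
open Real Finset

/-- From the symmetrized angle-structure equations of `𝒯_{K(p,q)}` at the
first layered solid torus, together with the tetrahedron (triple-sum) conditions, one
deduces `Z = b₀ + b₃` (Equation (41) of the paper). -/
theorem Z_eq_b0_add_b3 (p : ℕ) (hp : 4 ≤ p)
    (X Y Z U V W a0 b0 c0 a3 b3 c3 : ℝ) (a b c : ℕ → ℝ)
    (hXYZ : X + Y + Z = π) (hUVW : U + V + W = π)
    (h0 : a0 + b0 + c0 = π) (h3 : a3 + b3 + c3 = π)
    (hk : ∀ k ≤ p - 3, a k + b k + c k = π)
    (e1 : a 0 + 2*b0 + b3 + 2*U + 2*X + 2*Y = 2*π)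
    (e2 : a 1 + b3 + 2 * c 0 + 2*V = 2*π)
    (e3 : 2*W + (∑ k ∈ Finset.range (p-2), 2 * b k) + a (p-3) = 2*π)
    (e4 : ∀ i, i + 5 ≤ p → 2 * c (i+1) + a (i+2) + a i = 2*π)
    (e5 : a (p-4) + 2 * c (p-3) = 2*π) :
    Z = b0 + b3 := by
  obtain ⟨m, rfl⟩ : ∃ m, p = m + 4 := ⟨p - 4, by omega⟩
  have h2 : m + 4 - 2 = m + 2 := by omega
  have h3' : m + 4 - 3 = m + 1 := by omega
  have h4' : m + 4 - 4 = m := by omega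
  rw [h2, h3'] at e3
  rw [h3'] at hk
  rw [h3', h4'] at e5
  -- sum of equations e4
  have hsum4 : ∑ i ∈ Finset.range m, (2 * c (i+1) + a (i+2) + a i) = (m : ℝ) * (2*π) := by
    rw [Finset.sum_congr rfl (fun i hi => e4 i (by
      have := Finset.mem_range.mp hi; omega))]
    simp [mul_comm]
  have hks : ∑ k ∈ Finset.range (m+2), (a k + b k + c k) = ((m : ℝ) + 2) * π := by
    rw [Finset.sum_congr rfl (fun k hk' => hk k (by
      have := Finset.mem_range.mp hk'; omega))]
    push_cast [Finset.sum_const, Finset.card_range]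
    ring
  -- split sums
  have hsplit : ∑ k ∈ Finset.range (m+2), (a k + b k + c k)
      = (∑ k ∈ Finset.range (m+2), a k) + (∑ k ∈ Finset.range (m+2), b k)
        + (∑ k ∈ Finset.range (m+2), c k) := by
    rw [Finset.sum_add_distrib, Finset.sum_add_distrib]
  have hsplit4 : ∑ i ∈ Finset.range m, (2 * c (i+1) + a (i+2) + a i)
      = 2 * (∑ i ∈ Finset.range m, c (i+1)) + (∑ i ∈ Finset.range m, a (i+2))
        + (∑ i ∈ Finset.range m, a i) := by
    rw [Finset.sum_add_distrib, Finset.sum_add_distrib, Finset.mul_sum]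
  have hc1 : ∑ i ∈ Finset.range (m+1), c i
      = (∑ i ∈ Finset.range m, c (i+1)) + c 0 := Finset.sum_range_succ' c m
  have ha2 : ∑ i ∈ Finset.range (m+2), a i
      = (∑ i ∈ Finset.range m, a (i+2)) + a 1 + a 0 := by
    rw [Finset.sum_range_succ' a (m+1), Finset.sum_range_succ' (fun i => a (i+1)) m]
  have ha0 : ∑ i ∈ Finset.range (m+2), a i
      = (∑ i ∈ Finset.range m, a i) + a m + a (m+1) := by
    rw [Finset.sum_range_succ, Finset.sum_range_succ]
  have hcc : ∑ i ∈ Finset.range (m+2), c i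
      = (∑ i ∈ Finset.range (m+1), c i) + c (m+1) := Finset.sum_range_succ c (m+1)
  have he3 : ∑ k ∈ Finset.range (m+2), 2 * b k
      = 2 * ∑ k ∈ Finset.range (m+2), b k := (Finset.mul_sum _ _ _).symm
  rw [he3] at e3
  rw [hsplit] at hks
  rw [hsplit4] at hsum4
  linarith [hsum4, hks, hc1, ha2, ha0, hcc, e1, e2, e3, e5, hXYZ, hUVW]
end

section
/- Suppose nonnegative real numbers with $a_{k,1}+b_{k,1}+c_{k,1}=\pi$ for $0 \le k \le p-3$ satisfy $2c_{i+1,1}+a_{i+2,1}+a_{i,1}=2\pi$ for $0 \le i \le p-5$ and $a_{p-4,1}+2c_{p-3,1}=2\pi$. If $a_{0,1}=\pi$ and $b_{0,1}=c_{0,1}=0$, then a contradiction follows; i.e., it is impossible that the boundary tetrahedron of the layered solid torus is taut with $a$-angle $\pi$. -/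
open Real

/-- A taut angle triple: two angles are `0` and one is `π`. -/
def IsTaut (x y z : ℝ) : Prop :=
  (x = π ∧ y = 0 ∧ z = 0) ∨ (y = π ∧ x = 0 ∧ z = 0) ∨ (z = π ∧ x = 0 ∧ y = 0)

/-- Case 1(a) of Lemma 4.4: in a layered solid torus whose tetrahedra are
all taut, satisfying the interior edge equations and the folding equation, the boundary
tetrahedron cannot be taut with `a`-angle `π`. -/
theorem no_taut_a_pi (p : ℕ) (hp : 4 ≤ p) (a b c : ℕ → ℝ)
    (hnn : ∀ k ≤ p - 3, 0 ≤ a k ∧ 0 ≤ b k ∧ 0 ≤ c k)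
    (hsum : ∀ k ≤ p - 3, a k + b k + c k = π)
    (htaut : ∀ k ≤ p - 3, IsTaut (a k) (b k) (c k))
    (e4 : ∀ i, i + 5 ≤ p → 2 * c (i+1) + a (i+2) + a i = 2*π)
    (e5 : a (p-4) + 2 * c (p-3) = 2*π)
    (ha0 : a 0 = π) (hb0 : b 0 = 0) (hc0 : c 0 = 0) : False := by
  have hπ := Real.pi_pos
  have hval : ∀ k ≤ p - 3, (a k = π ∨ a k = 0) ∧ (c k = π ∨ c k = 0) := by
    intro k hk
    rcases htaut k hk with ⟨h1, h2, h3⟩ | ⟨h1, h2, h3⟩ | ⟨h1, h2, h3⟩ <;> tauto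
  have key : ∀ k, 2*k + 3 ≤ p → a (2*k) = π := by
    intro k
    induction k with
    | zero => intro _; simpa using ha0
    | succ n ih =>
      intro hkp
      have h5 : 2*n + 5 ≤ p := by omega
      have han : a (2*n) = π := ih (by omega)
      have he := e4 (2*n) h5
      have hc1 := (hval (2*n+1) (by omega)).2
      have ha2 := (hval (2*n+2) (by omega)).1
      have : a (2*n+2) = π := by
        rcases hc1 with h | h <;> rcases ha2 with h' | h' <;> linarith
      simpa [Nat.mul_succ] using this
  rcases Nat.even_or_odd p with ⟨m, hm⟩ | ⟨m, hm⟩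
  · -- p even: p - 4 = 2*(m-2)
    have h1 : a (p-4) = π := by
      have := key (m-2) (by omega)
      have : a (2*(m-2)) = π := this
      have heq : 2*(m-2) = p - 4 := by omega
      rwa [heq] at this
    have hc := (hval (p-3) (by omega)).2
    rcases hc with h | h <;> linarith
  · -- p odd: p - 3 = 2*(m-1)
    have h1 : a (p-3) = π := by
      have := key (m-1) (by omega)
      have heq : 2*(m-1) = p - 3 := by omega
      rwa [heq] at this
    have hc : c (p-3) = 0 := by
      rcases htaut (p-3) le_rfl with ⟨_, _, h⟩ | ⟨_, h, _⟩ | ⟨_, h, _⟩ <;> linarith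
    have hnn4 := hnn (p-4) (by omega)
    have hsum4 := hsum (p-4) (by omega)
    linarith [hnn4.1, hnn4.2.1, hnn4.2.2]
end

section
/- Suppose angles in $[0,\pi]$ satisfy: $W+Z+a_3+c_0 = 2\pi$; $2b_0+b_3+2U+2X+2Y = 2\pi$; $b_3+2V+2W = 2\pi$; $a_0+2X+2c_3+2U+2V = 2\pi$; $a_0+2Y+2Z = 2\pi$; together with $X+Y+Z = U+V+W = a_0+b_0+c_0 = a_3+b_3+c_3 = \pi$. Further assume the 'flat implies taut' property: whenever one angle of a triple is $0$, the remaining two of that triple are $0$ and $\pi$ in some order. If any one of the eight angle triples has a zero angle, then all eight triples are taut (every triple has angles $\{0,0,\pi\}$). -/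
open Real

/-- the `p = q = 2` case of Lemma 4.4: for the gluing equations of
`𝒯_{K(2,2)}` with the flat-implies-taut property, if any of the eight angle triples has
a zero angle then all triples are taut. -/
theorem K22_flat_implies_all_taut (X Y Z U V W a0 b0 c0 a3 b3 c3 : ℝ)
    (hX : X ∈ Set.Icc (0:ℝ) π) (hY : Y ∈ Set.Icc (0:ℝ) π) (hZ : Z ∈ Set.Icc (0:ℝ) π)
    (hU : U ∈ Set.Icc (0:ℝ) π) (hV : V ∈ Set.Icc (0:ℝ) π) (hW : W ∈ Set.Icc (0:ℝ) π)
    (ha0 : a0 ∈ Set.Icc (0:ℝ) π) (hb0 : b0 ∈ Set.Icc (0:ℝ) π) (hc0 : c0 ∈ Set.Icc (0:ℝ) π)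
    (ha3 : a3 ∈ Set.Icc (0:ℝ) π) (hb3 : b3 ∈ Set.Icc (0:ℝ) π) (hc3 : c3 ∈ Set.Icc (0:ℝ) π)
    (s1 : X + Y + Z = π) (s2 : U + V + W = π)
    (s3 : a0 + b0 + c0 = π) (s4 : a3 + b3 + c3 = π)
    (e1 : W + Z + a3 + c0 = 2*π)
    (e2 : 2*b0 + b3 + 2*U + 2*X + 2*Y = 2*π)
    (e3 : b3 + 2*V + 2*W = 2*π)
    (e4 : a0 + 2*X + 2*c3 + 2*U + 2*V = 2*π)
    (e5 : a0 + 2*Y + 2*Z = 2*π)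
    (t1 : X = 0 ∨ Y = 0 ∨ Z = 0 → IsTaut X Y Z)
    (t2 : U = 0 ∨ V = 0 ∨ W = 0 → IsTaut U V W)
    (t3 : a0 = 0 ∨ b0 = 0 ∨ c0 = 0 → IsTaut a0 b0 c0)
    (t4 : a3 = 0 ∨ b3 = 0 ∨ c3 = 0 → IsTaut a3 b3 c3) :
    ((X = 0 ∨ Y = 0 ∨ Z = 0) ∨ (U = 0 ∨ V = 0 ∨ W = 0) ∨
     (a0 = 0 ∨ b0 = 0 ∨ c0 = 0) ∨ (a3 = 0 ∨ b3 = 0 ∨ c3 = 0)) →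
    IsTaut X Y Z ∧ IsTaut U V W ∧ IsTaut a0 b0 c0 ∧ IsTaut a3 b3 c3 := by
  intro h
  obtain ⟨hX0, hX1⟩ := hX
  obtain ⟨hY0, hY1⟩ := hY
  obtain ⟨hZ0, hZ1⟩ := hZ
  obtain ⟨hU0, hU1⟩ := hU
  obtain ⟨hV0, hV1⟩ := hV
  obtain ⟨hW0, hW1⟩ := hW
  obtain ⟨ha00, ha01⟩ := ha0
  obtain ⟨hb00, hb01⟩ := hb0
  obtain ⟨hc00, hc01⟩ := hc0
  obtain ⟨ha30, ha31⟩ := ha3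
  obtain ⟨hb30, hb31⟩ := hb3
  obtain ⟨hc30, hc31⟩ := hc3
  have hpi : (0:ℝ) < π := Real.pi_pos
  have ea0 : a0 = 2*X := by linarith
  have eb3 : b3 = 2*U := by linarith
  have eb0 : b0 = Z - 2*U := by linarith
  have ec3 : c3 = W - 2*X := by linarith
  have ec0 : c0 = Y - X + 2*U := by linarith
  have ea3 : a3 = V - U + 2*X := by linarith
  -- Core lemma: X = 0 and U = 0 give all four taut.
  have L : X = 0 → U = 0 →
      IsTaut X Y Z ∧ IsTaut U V W ∧ IsTaut a0 b0 c0 ∧ IsTaut a3 b3 c3 := by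
    intro hx hu
    have ht1 := t1 (Or.inl hx)
    have ht2 := t2 (Or.inl hu)
    refine ⟨ht1, ht2, ?_, ?_⟩
    · rcases ht1 with ⟨h1, h2, h3⟩ | ⟨h1, h2, h3⟩ | ⟨h1, h2, h3⟩
      · exact absurd h1 (by rw [hx]; linarith)
      · exact Or.inr (Or.inr ⟨by linarith, by linarith, by linarith⟩)
      · exact Or.inr (Or.inl ⟨by linarith, by linarith, by linarith⟩)
    · rcases ht2 with ⟨h1, h2, h3⟩ | ⟨h1, h2, h3⟩ | ⟨h1, h2, h3⟩
      · exact absurd h1 (by rw [hu]; linarith)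
      · exact Or.inl ⟨by linarith, by linarith, by linarith⟩
      · exact Or.inr (Or.inr ⟨by linarith, by linarith, by linarith⟩)
  -- X = 0 suffices.
  have L2 : X = 0 →
      IsTaut X Y Z ∧ IsTaut U V W ∧ IsTaut a0 b0 c0 ∧ IsTaut a3 b3 c3 := by
    intro hx
    rcases t1 (Or.inl hx) with ⟨h1, h2, h3⟩ | ⟨h1, h2, h3⟩ | ⟨h1, h2, h3⟩
    · exact absurd h1 (by rw [hx]; linarith)
    · exact L hx (by linarith)
    · -- Z = π, X = 0, Y = 0
      have ha0z : a0 = 0 := by linarith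
      rcases t3 (Or.inl ha0z) with ⟨g1, g2, g3⟩ | ⟨g1, g2, g3⟩ | ⟨g1, g2, g3⟩
      · exact absurd g1 (by rw [ha0z]; linarith)
      · exact L hx (by linarith)
      · -- c0 = π, so U = π/2, b3 = π, c3 = 0, W = 0: contradiction via t2
        have hu2 : 2*U = π := by linarith
        have hc3z : c3 = 0 := by linarith
        have hw : W = 0 := by linarith
        rcases t2 (Or.inr (Or.inr hw)) with ⟨k1, k2, k3⟩ | ⟨k1, k2, k3⟩ | ⟨k1, k2, k3⟩
        · exact absurd k1 (by intro hk; linarith)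
        · exact absurd k2 (by intro hk; linarith)
        · exact absurd k2 (by intro hk; linarith)
  -- U = 0 suffices.
  have L3 : U = 0 →
      IsTaut X Y Z ∧ IsTaut U V W ∧ IsTaut a0 b0 c0 ∧ IsTaut a3 b3 c3 := by
    intro hu
    rcases t2 (Or.inl hu) with ⟨h1, h2, h3⟩ | ⟨h1, h2, h3⟩ | ⟨h1, h2, h3⟩
    · exact absurd h1 (by rw [hu]; linarith)
    · exact L (by linarith) hu
    · -- W = π, U = 0, V = 0
      have hb3z : b3 = 0 := by linarith
      rcases t4 (Or.inr (Or.inl hb3z)) with ⟨g1, g2, g3⟩ | ⟨g1, g2, g3⟩ | ⟨g1, g2, g3⟩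
      · -- a3 = π, so X = π/2, Y = π/2, Z = 0: contradiction via t1
        have hx2 : 2*X = π := by linarith
        have hy : Y = π/2 := by
          have hYge : Y ≥ π/2 := by linarith
          have hYle : Y ≤ π/2 := by linarith
          linarith
        have hz : Z = 0 := by linarith
        rcases t1 (Or.inr (Or.inr hz)) with ⟨k1, k2, k3⟩ | ⟨k1, k2, k3⟩ | ⟨k1, k2, k3⟩
        · exact absurd k1 (by intro hk; linarith)
        · exact absurd k1 (by intro hk; linarith)
        · exact absurd k2 (by intro hk; linarith)
      · exact absurd g1 (by rw [hb3z] at g1 ⊢; linarith)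
      · exact L (by linarith) hu
  -- Top-level case analysis.
  rcases h with h | h | h | h
  · rcases t1 h with ⟨h1, h2, h3⟩ | ⟨h1, h2, h3⟩ | ⟨h1, h2, h3⟩
    · exact absurd h1 (by intro hk; linarith)
    · exact L2 h2
    · exact L2 h2
  · rcases t2 h with ⟨h1, h2, h3⟩ | ⟨h1, h2, h3⟩ | ⟨h1, h2, h3⟩
    · exact absurd h1 (by intro hk; linarith)
    · exact L3 h2
    · exact L3 h2
  · rcases t3 h with ⟨h1, h2, h3⟩ | ⟨h1, h2, h3⟩ | ⟨h1, h2, h3⟩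
    · -- a0 = π forces W = π, hence U = 0
      have hw : W = π := by linarith
      exact L3 (by linarith)
    · -- b0 = π forces U = 0
      exact L3 (by linarith)
    · -- c0 = π with a0 = 0 gives X = 0
      exact L2 (by linarith)
  · rcases t4 h with ⟨h1, h2, h3⟩ | ⟨h1, h2, h3⟩ | ⟨h1, h2, h3⟩
    · exact L3 (by linarith)
    · -- b3 = π forces Z = π hence X = 0
      exact L2 (by linarith)
    · exact L3 (by linarith)
end

section
/- Suppose angles in $[0,\pi]$ with triple sums $\pi$ as above satisfy the $K(2,2)$ gluing equations: $W+Z+a_3+c_0 = 2\pi$, $2b_0+b_3+2U+2X+2Y = 2\pi$, $b_3+2V+2W = 2\pi$, $a_0+2X+2c_3+2U+2V = 2\pi$, $a_0+2Y+2Z = 2\pi$, and the flat-implies-taut property. Then $b_3 = \pi$ is impossible. -/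
open Real

/-- case (6) of the `p = q = 2` argument of Lemma 4.4: for angles
satisfying the `K(2,2)` gluing equations and the flat-implies-taut property,
`b₃ = π` is impossible. -/
theorem K22_b3_ne_pi (X Y Z U V W a0 b0 c0 a3 b3 c3 : ℝ)
    (hX : X ∈ Set.Icc (0:ℝ) π) (hY : Y ∈ Set.Icc (0:ℝ) π) (hZ : Z ∈ Set.Icc (0:ℝ) π)
    (hU : U ∈ Set.Icc (0:ℝ) π) (hV : V ∈ Set.Icc (0:ℝ) π) (hW : W ∈ Set.Icc (0:ℝ) π)
    (ha0 : a0 ∈ Set.Icc (0:ℝ) π) (hb0 : b0 ∈ Set.Icc (0:ℝ) π) (hc0 : c0 ∈ Set.Icc (0:ℝ) π)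
    (ha3 : a3 ∈ Set.Icc (0:ℝ) π) (hb3 : b3 ∈ Set.Icc (0:ℝ) π) (hc3 : c3 ∈ Set.Icc (0:ℝ) π)
    (s1 : X + Y + Z = π) (s2 : U + V + W = π)
    (s3 : a0 + b0 + c0 = π) (s4 : a3 + b3 + c3 = π)
    (e1 : W + Z + a3 + c0 = 2*π)
    (e2 : 2*b0 + b3 + 2*U + 2*X + 2*Y = 2*π)
    (e3 : b3 + 2*V + 2*W = 2*π)
    (e4 : a0 + 2*X + 2*c3 + 2*U + 2*V = 2*π)
    (e5 : a0 + 2*Y + 2*Z = 2*π)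
    (t1 : X = 0 ∨ Y = 0 ∨ Z = 0 → IsTaut X Y Z)
    (t2 : U = 0 ∨ V = 0 ∨ W = 0 → IsTaut U V W)
    (t3 : a0 = 0 ∨ b0 = 0 ∨ c0 = 0 → IsTaut a0 b0 c0)
    (t4 : a3 = 0 ∨ b3 = 0 ∨ c3 = 0 → IsTaut a3 b3 c3) :
    b3 ≠ π := by
  intro hb3
  subst hb3
  obtain ⟨hX0, _⟩ := hX; obtain ⟨hY0, _⟩ := hY
  obtain ⟨hb00, _⟩ := hb0; obtain ⟨ha30, _⟩ := ha3; obtain ⟨hc30, _⟩ := hc3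
  obtain ⟨ha00, _⟩ := ha0
  -- from e3, s2: 2U = π
  have hU2 : 2*U = π := by linarith
  -- from e2: b0 = X = Y = 0
  have hXz : X = 0 := by linarith
  have hYz : Y = 0 := by linarith
  -- a3 = c3 = 0 from s4
  have ha3z : a3 = 0 := by linarith
  have hc3z : c3 = 0 := by linarith
  -- Z = π from s1, then a0 = 0 from e5
  have hZp : Z = π := by linarith
  have ha0z : a0 = 0 := by linarith
  -- e4 ⇒ 2V = π ⇒ W = 0
  have hWz : W = 0 := by linarith
  have := t2 (Or.inr (Or.inr hWz))
  have hpi := Real.pi_pos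
  rcases this with ⟨h, _, _⟩ | ⟨h, h', _⟩ | ⟨h, h', _⟩ <;> linarith
end

section
/- Suppose angles in $[0,\pi]$ satisfy the symmetrized gluing system of $\mathcal{T}_{K(p,q)}$ for $p,q>2$ (Equations (30)–(40) of the paper), together with the triple-sum conditions $U+V+W = X+Y+Z = a_i+b_i+c_i = \pi$ and $a_{k,i}+b_{k,i}+c_{k,i} = \pi$ for all indices. Assume the flat-implies-taut property holds for every angle triple. Then: if any single angle among $b_0, U, X, Y$ equals $\pi$, then $a_{0,1} = 0$; if any angle among $c_3, V$ equals $\pi$, then $a_{0,2} = 0$; if $W = \pi$, then $b_{0,1} = \cdots = b_{p-3,1} = a_{p-3,1} = 0$; and if $Z = \pi$, then $b_{0,2} = \cdots = b_{q-3,2} = a_{q-3,2} = 0$. -/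
open Real Finset

/-- Case 3 of Lemma 4.4, `p, q > 2`: for the symmetrized gluing system
of `𝒯_{K(p,q)}` with flat-implies-taut, a `π`-angle among `b₀, U, X, Y` forces
`a_{0,1} = 0`; among `c₃, V` forces `a_{0,2} = 0`; `W = π` forces the first layered
solid torus `b`-angles and `a_{p-3,1}` to vanish; `Z = π` forces the analogous
vanishing in the second layered solid torus. -/
theorem case3_flat_propagation (p q : ℕ) (hp : 2 < p) (hq : 2 < q)
    (X Y Z U V W a0 b0 c0 a3 b3 c3 : ℝ) (a1 b1 c1 a2 b2 c2 : ℕ → ℝ)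
    (hX : X ∈ Set.Icc (0:ℝ) π) (hY : Y ∈ Set.Icc (0:ℝ) π) (hZ : Z ∈ Set.Icc (0:ℝ) π)
    (hU : U ∈ Set.Icc (0:ℝ) π) (hV : V ∈ Set.Icc (0:ℝ) π) (hW : W ∈ Set.Icc (0:ℝ) π)
    (ha0 : a0 ∈ Set.Icc (0:ℝ) π) (hb0 : b0 ∈ Set.Icc (0:ℝ) π) (hc0 : c0 ∈ Set.Icc (0:ℝ) π)
    (ha3 : a3 ∈ Set.Icc (0:ℝ) π) (hb3 : b3 ∈ Set.Icc (0:ℝ) π) (hc3 : c3 ∈ Set.Icc (0:ℝ) π)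
    (h1 : ∀ k, a1 k ∈ Set.Icc (0:ℝ) π ∧ b1 k ∈ Set.Icc (0:ℝ) π ∧ c1 k ∈ Set.Icc (0:ℝ) π)
    (h2 : ∀ k, a2 k ∈ Set.Icc (0:ℝ) π ∧ b2 k ∈ Set.Icc (0:ℝ) π ∧ c2 k ∈ Set.Icc (0:ℝ) π)
    (sXYZ : X + Y + Z = π) (sUVW : U + V + W = π)
    (s0 : a0 + b0 + c0 = π) (s3 : a3 + b3 + c3 = π)
    (s1 : ∀ k ≤ p - 3, a1 k + b1 k + c1 k = π)
    (s2 : ∀ k ≤ q - 3, a2 k + b2 k + c2 k = π)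
    (e30 : a1 0 + 2*b0 + b3 + 2*U + 2*X + 2*Y = 2*π)
    (e31 : a1 1 + b3 + 2 * c1 0 + 2*V = 2*π)
    (e32 : 2*W + (∑ k ∈ Finset.range (p - 2), 2 * b1 k) + a1 (p - 3) = 2*π)
    (e33 : ∀ i, i + 5 ≤ p → 2 * c1 (i+1) + a1 (i+2) + a1 i = 2*π)
    (e34 : a1 (p - 4) + 2 * c1 (p - 3) = 2*π)
    (e35 : W + Z + a3 + c0 = 2*π)
    (e36 : a2 0 + a0 + 2*c3 + 2*U + 2*V + 2*X = 2*π)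
    (e37 : a2 1 + 2 * c2 0 + a0 + 2*Y = 2*π)
    (e38 : 2*Z + (∑ k ∈ Finset.range (q - 2), 2 * b2 k) + a2 (q - 3) = 2*π)
    (e39 : ∀ j, j + 5 ≤ q → 2 * c2 (j+1) + a2 (j+2) + a2 j = 2*π)
    (e40 : a2 (q - 4) + 2 * c2 (q - 3) = 2*π)
    (tXYZ : X = 0 ∨ Y = 0 ∨ Z = 0 → IsTaut X Y Z)
    (tUVW : U = 0 ∨ V = 0 ∨ W = 0 → IsTaut U V W)
    (t0 : a0 = 0 ∨ b0 = 0 ∨ c0 = 0 → IsTaut a0 b0 c0)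
    (t3 : a3 = 0 ∨ b3 = 0 ∨ c3 = 0 → IsTaut a3 b3 c3)
    (t1 : ∀ k ≤ p - 3, (a1 k = 0 ∨ b1 k = 0 ∨ c1 k = 0) → IsTaut (a1 k) (b1 k) (c1 k))
    (t2 : ∀ k ≤ q - 3, (a2 k = 0 ∨ b2 k = 0 ∨ c2 k = 0) → IsTaut (a2 k) (b2 k) (c2 k)) :
    ((b0 = π ∨ U = π ∨ X = π ∨ Y = π) → a1 0 = 0) ∧
    ((c3 = π ∨ V = π) → a2 0 = 0) ∧
    (W = π → (∀ k ≤ p - 3, b1 k = 0) ∧ a1 (p - 3) = 0) ∧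
    (Z = π → (∀ k ≤ q - 3, b2 k = 0) ∧ a2 (q - 3) = 0) := by
  refine ⟨?_, ?_, ?_, ?_⟩
  · rintro (h | h | h | h) <;>
      linarith [hU.1, hX.1, hY.1, hb0.1, hb3.1, (h1 0).1.1,
        hU.2, hX.2, hY.2, hb0.2, hb3.2, (h1 0).1.2]
  · rintro (h | h) <;>
      linarith [hU.1, hV.1, hX.1, ha0.1, hc3.1, (h2 0).1.1,
        hU.2, hV.2, hX.2, ha0.2, hc3.2, (h2 0).1.2]
  · intro hWpi
    have hS : (0:ℝ) ≤ ∑ k ∈ Finset.range (p - 2), 2 * b1 k :=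
      Finset.sum_nonneg fun k _ => by linarith [(h1 k).2.1.1]
    have ha : a1 (p - 3) = 0 := by linarith [(h1 (p-3)).1.1]
    have hS0 : ∑ k ∈ Finset.range (p - 2), 2 * b1 k = 0 := by
      linarith [(h1 (p-3)).1.1]
    have hall := (Finset.sum_eq_zero_iff_of_nonneg
      (fun k _ => by linarith [(h1 k).2.1.1] : ∀ k ∈ Finset.range (p-2), (0:ℝ) ≤ 2 * b1 k)).1 hS0
    refine ⟨fun k hk => ?_, ha⟩
    have := hall k (Finset.mem_range.2 (by omega))
    linarith
  · intro hZpi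
    have hS : (0:ℝ) ≤ ∑ k ∈ Finset.range (q - 2), 2 * b2 k :=
      Finset.sum_nonneg fun k _ => by linarith [(h2 k).2.1.1]
    have ha : a2 (q - 3) = 0 := by linarith [(h2 (q-3)).1.1]
    have hS0 : ∑ k ∈ Finset.range (q - 2), 2 * b2 k = 0 := by
      linarith [(h2 (q-3)).1.1]
    have hall := (Finset.sum_eq_zero_iff_of_nonneg
      (fun k _ => by linarith [(h2 k).2.1.1] : ∀ k ∈ Finset.range (q-2), (0:ℝ) ≤ 2 * b2 k)).1 hS0
    refine ⟨fun k hk => ?_, ha⟩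
    have := hall k (Finset.mem_range.2 (by omega))
    linarith
end

section
/- Suppose nonnegative reals with triple sums $\pi$ satisfy the symmetrized gluing system of $\mathcal{T}_{K(p,q)}$ for $p,q > 2$ together with the derived relations $Z = b_0 + b_3$ and $W = c_3 + a_0$, and the flat-implies-taut property. If $a_0 = \pi$, then $W = \pi$ and consequently $b_{0,1} = \cdots = b_{p-3,1} = a_{p-3,1} = 0$; if $b_3 = \pi$, then $Z = \pi$ and consequently $b_{0,2} = \cdots = b_{q-3,2} = a_{q-3,2} = 0$. -/
open Real Finset

/-- cases 3(d), 3(f) of Lemma 4.4: for the symmetrized gluing system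
of `𝒯_{K(p,q)}` (`p, q > 2`) together with the derived relations `Z = b₀ + b₃` and
`W = c₃ + a₀` and flat-implies-taut: `a₀ = π` forces `W = π` and hence the vanishing
`b_{0,1} = ⋯ = b_{p-3,1} = a_{p-3,1} = 0`, while `b₃ = π` forces `Z = π` and hence
`b_{0,2} = ⋯ = b_{q-3,2} = a_{q-3,2} = 0`. -/
theorem case3df_propagation (p q : ℕ) (hp : 2 < p) (hq : 2 < q)
    (X Y Z U V W a0 b0 c0 a3 b3 c3 : ℝ) (a1 b1 c1 a2 b2 c2 : ℕ → ℝ)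
    (hX : X ∈ Set.Icc (0:ℝ) π) (hY : Y ∈ Set.Icc (0:ℝ) π) (hZ : Z ∈ Set.Icc (0:ℝ) π)
    (hU : U ∈ Set.Icc (0:ℝ) π) (hV : V ∈ Set.Icc (0:ℝ) π) (hW : W ∈ Set.Icc (0:ℝ) π)
    (ha0 : a0 ∈ Set.Icc (0:ℝ) π) (hb0 : b0 ∈ Set.Icc (0:ℝ) π) (hc0 : c0 ∈ Set.Icc (0:ℝ) π)
    (ha3 : a3 ∈ Set.Icc (0:ℝ) π) (hb3 : b3 ∈ Set.Icc (0:ℝ) π) (hc3 : c3 ∈ Set.Icc (0:ℝ) π)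
    (h1 : ∀ k, a1 k ∈ Set.Icc (0:ℝ) π ∧ b1 k ∈ Set.Icc (0:ℝ) π ∧ c1 k ∈ Set.Icc (0:ℝ) π)
    (h2 : ∀ k, a2 k ∈ Set.Icc (0:ℝ) π ∧ b2 k ∈ Set.Icc (0:ℝ) π ∧ c2 k ∈ Set.Icc (0:ℝ) π)
    (sXYZ : X + Y + Z = π) (sUVW : U + V + W = π)
    (s0 : a0 + b0 + c0 = π) (s3 : a3 + b3 + c3 = π)
    (s1 : ∀ k ≤ p - 3, a1 k + b1 k + c1 k = π)
    (s2 : ∀ k ≤ q - 3, a2 k + b2 k + c2 k = π)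
    (e30 : a1 0 + 2*b0 + b3 + 2*U + 2*X + 2*Y = 2*π)
    (e31 : a1 1 + b3 + 2 * c1 0 + 2*V = 2*π)
    (e32 : 2*W + (∑ k ∈ Finset.range (p - 2), 2 * b1 k) + a1 (p - 3) = 2*π)
    (e33 : ∀ i, i + 5 ≤ p → 2 * c1 (i+1) + a1 (i+2) + a1 i = 2*π)
    (e34 : a1 (p - 4) + 2 * c1 (p - 3) = 2*π)
    (e35 : W + Z + a3 + c0 = 2*π)
    (e36 : a2 0 + a0 + 2*c3 + 2*U + 2*V + 2*X = 2*π)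
    (e37 : a2 1 + 2 * c2 0 + a0 + 2*Y = 2*π)
    (e38 : 2*Z + (∑ k ∈ Finset.range (q - 2), 2 * b2 k) + a2 (q - 3) = 2*π)
    (e39 : ∀ j, j + 5 ≤ q → 2 * c2 (j+1) + a2 (j+2) + a2 j = 2*π)
    (e40 : a2 (q - 4) + 2 * c2 (q - 3) = 2*π)
    (hZrel : Z = b0 + b3) (hWrel : W = c3 + a0)
    (tXYZ : X = 0 ∨ Y = 0 ∨ Z = 0 → IsTaut X Y Z)
    (tUVW : U = 0 ∨ V = 0 ∨ W = 0 → IsTaut U V W)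
    (t0 : a0 = 0 ∨ b0 = 0 ∨ c0 = 0 → IsTaut a0 b0 c0)
    (t3 : a3 = 0 ∨ b3 = 0 ∨ c3 = 0 → IsTaut a3 b3 c3)
    (t1 : ∀ k ≤ p - 3, (a1 k = 0 ∨ b1 k = 0 ∨ c1 k = 0) → IsTaut (a1 k) (b1 k) (c1 k))
    (t2 : ∀ k ≤ q - 3, (a2 k = 0 ∨ b2 k = 0 ∨ c2 k = 0) → IsTaut (a2 k) (b2 k) (c2 k)) :
    (a0 = π → W = π ∧ (∀ k ≤ p - 3, b1 k = 0) ∧ a1 (p - 3) = 0) ∧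
    (b3 = π → Z = π ∧ (∀ k ≤ q - 3, b2 k = 0) ∧ a2 (q - 3) = 0) := by
  constructor
  · intro ha
    have hc3z : c3 = 0 := by
      linarith [hW.2, hc3.1, hWrel, ha.ge]
    have hWpi : W = π := by rw [hWrel, hc3z, ha]; ring
    have hsum0 : (∑ k ∈ Finset.range (p - 2), 2 * b1 k) + a1 (p - 3) = 0 := by
      linarith
    have hsnn : 0 ≤ ∑ k ∈ Finset.range (p - 2), 2 * b1 k :=
      Finset.sum_nonneg fun k _ => by linarith [(h1 k).2.1.1]
    have ha1z : a1 (p - 3) = 0 := le_antisymm (by linarith) (h1 (p - 3)).1.1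
    have hsz : (∑ k ∈ Finset.range (p - 2), 2 * b1 k) = 0 := by linarith
    refine ⟨hWpi, ?_, ha1z⟩
    intro k hk
    have hmem : k ∈ Finset.range (p - 2) := Finset.mem_range.mpr (by omega)
    have := (Finset.sum_eq_zero_iff_of_nonneg
      (fun k _ => by linarith [(h1 k).2.1.1] : ∀ k ∈ Finset.range (p - 2), 0 ≤ 2 * b1 k)).mp hsz k hmem
    linarith
  · intro hb
    have hb0z : b0 = 0 := by
      linarith [hZ.2, hb0.1, hZrel, hb.ge]
    have hZpi : Z = π := by rw [hZrel, hb0z, hb]; ring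
    have hsum0 : (∑ k ∈ Finset.range (q - 2), 2 * b2 k) + a2 (q - 3) = 0 := by
      linarith
    have hsnn : 0 ≤ ∑ k ∈ Finset.range (q - 2), 2 * b2 k :=
      Finset.sum_nonneg fun k _ => by linarith [(h2 k).2.1.1]
    have ha2z : a2 (q - 3) = 0 := le_antisymm (by linarith) (h2 (q - 3)).1.1
    have hsz : (∑ k ∈ Finset.range (q - 2), 2 * b2 k) = 0 := by linarith
    refine ⟨hZpi, ?_, ha2z⟩
    intro k hk
    have hmem : k ∈ Finset.range (q - 2) := Finset.mem_range.mpr (by omega)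
    have := (Finset.sum_eq_zero_iff_of_nonneg
      (fun k _ => by linarith [(h2 k).2.1.1] : ∀ k ∈ Finset.range (q - 2), 0 ≤ 2 * b2 k)).mp hsz k hmem
    linarith
end

section
/- Suppose angles in $[0,\pi]$ with triple sums $\pi$ satisfy the $p=2$, $q>2$ gluing system: $2\pi = 2b_0 + b_3 + 2U + 2X + 2Y$; $2\pi = b_3 + 2V + 2W$; $2\pi = W + Z + a_3 + c_0$; $2\pi = a_{0,2} + a_0 + 2c_3 + 2U + 2V + 2X$; $2\pi = 2c_{0,2} + a_0 + a_{1,2} + 2Y$; $2\pi = 2Z + 2b_{0,2} + \cdots + 2b_{q-3,2} + a_{q-3,2}$; $2\pi = 2c_{j+1,2} + a_{j+2,2} + a_{j,2}$ for $0 \le j \le q-5$; $2\pi = a_{q-4,2} + 2c_{q-3,2}$; together with the derived relation $W = c_3 + a_0$ and the flat-implies-taut property. Then $b_3 = \pi$ is impossible. -/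
open Real Finset

/-- case (9) of the `K(2,q)` argument of Lemma 4.4: for angles
satisfying the `p = 2`, `q > 2` gluing system, the derived relation `W = c₃ + a₀`,
and flat-implies-taut, `b₃ = π` is impossible. -/
theorem K2q_b3_ne_pi (q : ℕ) (hq : 2 < q)
    (X Y Z U V W a0 b0 c0 a3 b3 c3 : ℝ) (a2 b2 c2 : ℕ → ℝ)
    (hX : X ∈ Set.Icc (0:ℝ) π) (hY : Y ∈ Set.Icc (0:ℝ) π) (hZ : Z ∈ Set.Icc (0:ℝ) π)
    (hU : U ∈ Set.Icc (0:ℝ) π) (hV : V ∈ Set.Icc (0:ℝ) π) (hW : W ∈ Set.Icc (0:ℝ) π)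
    (ha0 : a0 ∈ Set.Icc (0:ℝ) π) (hb0 : b0 ∈ Set.Icc (0:ℝ) π) (hc0 : c0 ∈ Set.Icc (0:ℝ) π)
    (ha3 : a3 ∈ Set.Icc (0:ℝ) π) (hb3 : b3 ∈ Set.Icc (0:ℝ) π) (hc3 : c3 ∈ Set.Icc (0:ℝ) π)
    (h2 : ∀ j, a2 j ∈ Set.Icc (0:ℝ) π ∧ b2 j ∈ Set.Icc (0:ℝ) π ∧ c2 j ∈ Set.Icc (0:ℝ) π)
    (sXYZ : X + Y + Z = π) (sUVW : U + V + W = π)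
    (s0 : a0 + b0 + c0 = π) (s3 : a3 + b3 + c3 = π)
    (s2 : ∀ j ≤ q - 3, a2 j + b2 j + c2 j = π)
    (m1 : 2*b0 + b3 + 2*U + 2*X + 2*Y = 2*π)
    (m3 : b3 + 2*V + 2*W = 2*π)
    (m4 : W + Z + a3 + c0 = 2*π)
    (m5 : a2 0 + a0 + 2*c3 + 2*U + 2*V + 2*X = 2*π)
    (m6 : 2 * c2 0 + a0 + a2 1 + 2*Y = 2*π)
    (m7 : 2*Z + (∑ j ∈ Finset.range (q - 2), 2 * b2 j) + a2 (q - 3) = 2*π)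
    (m8 : ∀ j, j + 5 ≤ q → 2 * c2 (j+1) + a2 (j+2) + a2 j = 2*π)
    (m9 : a2 (q - 4) + 2 * c2 (q - 3) = 2*π)
    (hWrel : W = c3 + a0)
    (tXYZ : X = 0 ∨ Y = 0 ∨ Z = 0 → IsTaut X Y Z)
    (tUVW : U = 0 ∨ V = 0 ∨ W = 0 → IsTaut U V W)
    (t0 : a0 = 0 ∨ b0 = 0 ∨ c0 = 0 → IsTaut a0 b0 c0)
    (t3 : a3 = 0 ∨ b3 = 0 ∨ c3 = 0 → IsTaut a3 b3 c3)
    (t2 : ∀ j ≤ q - 3, (a2 j = 0 ∨ b2 j = 0 ∨ c2 j = 0) → IsTaut (a2 j) (b2 j) (c2 j)) :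
    b3 ≠ π := by
  intro hb3
  have hpi := Real.pi_pos
  obtain ⟨hX0, hX1⟩ := hX
  obtain ⟨hY0, hY1⟩ := hY
  obtain ⟨hZ0, hZ1⟩ := hZ
  obtain ⟨hU0, hU1⟩ := hU
  obtain ⟨hV0, hV1⟩ := hV
  obtain ⟨hW0, hW1⟩ := hW
  obtain ⟨ha00, ha01⟩ := ha0
  obtain ⟨hb00, hb01⟩ := hb0
  obtain ⟨hc00, hc01⟩ := hc0
  obtain ⟨ha30, ha31⟩ := ha3
  obtain ⟨hc30, hc31⟩ := hc3
  have ha3z : a3 = 0 := by linarith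
  have hc3z : c3 = 0 := by linarith
  have hWa0 : W = a0 := by linarith
  have hb0z : b0 = 0 := by linarith
  have hZpi : Z = π := by linarith
  have hXz : X = 0 := by linarith
  have hYz : Y = 0 := by linarith
  have hUhalf : U = π / 2 := by linarith
  have hVval : V = π / 2 - a0 := by linarith
  -- from m7, all b2 j in range (q-2) vanish; in particular b2 0 = 0
  have hsum0 : (∑ j ∈ Finset.range (q - 2), 2 * b2 j) + a2 (q - 3) = 0 := by linarith
  have hsumnn : (0:ℝ) ≤ ∑ j ∈ Finset.range (q - 2), 2 * b2 j :=
    Finset.sum_nonneg (fun j _ => mul_nonneg (by norm_num) (h2 j).2.1.1)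
  have ha2qnn : (0:ℝ) ≤ a2 (q - 3) := (h2 (q-3)).1.1
  have hsumz : (∑ j ∈ Finset.range (q - 2), 2 * b2 j) = 0 := by linarith
  have hb20 : b2 0 = 0 := by
    have hmem : 0 ∈ Finset.range (q - 2) := Finset.mem_range.mpr (by omega)
    have hle : 2 * b2 0 ≤ ∑ j ∈ Finset.range (q - 2), 2 * b2 j :=
      Finset.single_le_sum (fun j _ => mul_nonneg (by norm_num) (h2 j).2.1.1) hmem
    have := (h2 0).2.1.1
    linarith
  have htaut := t2 0 (Nat.zero_le _) (Or.inr (Or.inl hb20))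
  have ha20 : a2 0 = a0 := by linarith
  rcases htaut with ⟨h1, h2', h3'⟩ | ⟨h1, h2', h3'⟩ | ⟨h1, h2', h3'⟩
  · -- a2 0 = π, so a0 = π, contradicting V ≥ 0
    linarith
  · linarith
  · -- c2 0 = π, a2 0 = 0, so a0 = 0, W = 0, taut U V W, but U = π/2
    have hWz : W = 0 := by linarith
    rcases tUVW (Or.inr (Or.inr hWz)) with ⟨hu, _, _⟩ | ⟨_, hu, _⟩ | ⟨_, hu, _⟩ <;> linarith
end
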